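/- arXiv:1306.1097 — 3 statements merged into one kernel-verified Lean document; each statement's English description precedes it below -/
import Mathlib

section
/- Let m_k = ∑_{j=1}^K z_j^k ∑_{ℓ=0}^{ℓ_j - 1} c_{ℓ,j} k^ℓ with |z_j| = 1. The measurement map P sending the parameter vector ({c_{ℓ,j}}, {z_j}) ∈ ℂ^R (with R = ∑_j (ℓ_j + 1)) to the vector of measurements (m_{t}, m_{t+p}, ..., m_{t+(R-1)p}) has invertible Jacobian at a point if and only if z_j^p ≠ z_i^p for all i ≠ j and c_{ℓ_j - 1, j} ≠ 0 for all j. -/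
/-!
Write `x = (c, z)` and `v = (a, w)`, and let `A_j`, `C_j` be the polynomials with coefficient
vectors `a_j`, `c_j`. Since `z_j ≠ 0`, the derivative of `P` at `x` along `v` has entries
`∑_j z_j ^ (t+np) h_j(t+np)` with `h_j = A_j + (w_j / z_j) X C_j`, a polynomial of degree
`≤ ℓ_j` whose coefficient of `X ^ ℓ_j` is `(w_j / z_j) c_{ℓ_j-1,j}`.

If the `z_j ^ p` are distinct, a sum `∑_j u_j ^ n r_j(n)` with `deg r_j ≤ ℓ_j` cannot vanish
for all `n < ∑_j (ℓ_j + 1)` unless every `r_j = 0`: after dividing by `u_j₀ ^ n`, the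
`(ℓ_j₀+1)`-th forward difference kills the `j₀`-term and preserves the degrees of the others,
so induction on the number of nodes applies. Hence the kernel of the derivative consists of
the `v` with all `h_j = 0`, which forces `v = 0` exactly when all `c_{ℓ_j-1,j} ≠ 0`; otherwise
`h_j₀ = 0` has a solution with `w_j₀ = 1`. If `z_i ^ p = z_j ^ p`, constant `h_i` and `h_j`
cancel. The Jacobian is square, so injectivity is bijectivity.
-/

open Polynomial Finset Function fwdDiff

theorem fwdDiff_iter_eq_zero_of_forall_lt {G : Type*} [AddCommGroup G] {a : ℕ → G} {m N : ℕ}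
    (ha : ∀ n < m + N, a n = 0) {n : ℕ} (hn : n < N) : Δ_[1] ^[m] a n = 0 := by
  rw [fwdDiff_iter_eq_sum_shift]
  refine sum_eq_zero fun k hk ↦ ?_
  rw [ha _ (by rw [mem_range] at hk; rw [smul_eq_mul, mul_one]; omega), smul_zero]

namespace Polynomial

section OfFn

variable {R : Type*} [Semiring R] [DecidableEq R]

theorem eval_ofFn {n : ℕ} (v : Fin n → R) (y : R) :
    (ofFn n v).eval y = ∑ i, v i * y ^ (i : ℕ) := by
  simp [ofFn_eq_sum_monomial, eval_finsetSum]

theorem natDegree_X_mul_ofFn_lt {n : ℕ} {c : Fin n → R} (hn : 0 < n)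
    (hc : c ⟨n - 1, Nat.sub_lt hn one_pos⟩ = 0) : (X * ofFn n c).natDegree < n := by
  refine Nat.lt_of_le_pred hn (natDegree_le_iff_coeff_eq_zero.mpr fun N hN ↦ ?_)
  obtain ⟨M, rfl⟩ : ∃ M, N = M + 1 := Nat.exists_eq_succ_of_ne_zero (by omega)
  rw [coeff_X_mul]
  rcases (show n - 1 ≤ M by rw [Nat.pred_eq_sub_one] at hN; omega).eq_or_lt with hM | hM
  · rwa [← hM, ofFn_coeff_eq_val_of_lt]
  · exact ofFn_coeff_eq_zero_of_ge _ (by omega)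

end OfFn

variable {F : Type*} [Field F]

-- `Δ (n ↦ u ^ n * r(n)) = n ↦ u ^ n * (u * r(n + 1) - r(n))`
noncomputable def twistedFwdDiff (u : F) : F[X] →ₗ[F] F[X] := u • taylor 1 - LinearMap.id

theorem twistedFwdDiff_apply (u : F) (r : F[X]) : twistedFwdDiff u r = C u * taylor 1 r - r := by
  simp [twistedFwdDiff, smul_eq_C_mul]

theorem eval_twistedFwdDiff (u : F) (r : F[X]) (y : F) :
    (twistedFwdDiff u r).eval y = u * r.eval (y + 1) - r.eval y := by
  simp [twistedFwdDiff_apply, taylor_eval]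

theorem fwdDiff_iter_pow_mul_eval (u : F) (r : F[X]) (m : ℕ) :
    Δ_[1] ^[m] (fun n : ℕ ↦ u ^ n * r.eval (n : F)) =
      fun n : ℕ ↦ u ^ n * ((twistedFwdDiff u)^[m] r).eval (n : F) := by
  induction m generalizing r with
  | zero => rfl
  | succ m ih =>
    have hstep : Δ_[1] (fun n : ℕ ↦ u ^ n * r.eval (n : F)) =
        fun n : ℕ ↦ u ^ n * (twistedFwdDiff u r).eval (n : F) := by
      ext n
      simp only [fwdDiff, eval_twistedFwdDiff, Nat.cast_add, Nat.cast_one, pow_succ]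
      ring
    rw [iterate_succ_apply, iterate_succ_apply, hstep, ih]

theorem twistedFwdDiff_injective {u : F} (hu : u ≠ 1) : Injective (twistedFwdDiff u) := by
  rw [← LinearMap.ker_eq_bot, LinearMap.ker_eq_bot']
  intro r hr
  have hcoeff : (twistedFwdDiff u r).coeff r.natDegree = (u - 1) * r.leadingCoeff := by
    rw [twistedFwdDiff_apply, coeff_sub, coeff_C_mul, coeff_taylor_natDegree, sub_one_mul]
    rfl
  rw [hr, coeff_zero, eq_comm, mul_eq_zero, sub_eq_zero] at hcoeff
  exact leadingCoeff_eq_zero.mp (hcoeff.resolve_left hu)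

theorem natDegree_twistedFwdDiff_le (u : F) (r : F[X]) :
    (twistedFwdDiff u r).natDegree ≤ r.natDegree := by
  rw [twistedFwdDiff_apply]
  refine (natDegree_sub_le _ _).trans (max_le ?_ le_rfl)
  exact (natDegree_C_mul_le _ _).trans (natDegree_taylor r 1).le

theorem natDegree_twistedFwdDiff_iter_le (u : F) (r : F[X]) (m : ℕ) :
    ((twistedFwdDiff u)^[m] r).natDegree ≤ r.natDegree := by
  induction m with
  | zero => rfl
  | succ m ih =>
    rw [iterate_succ_apply']
    exact (natDegree_twistedFwdDiff_le _ _).trans ih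

theorem eval_twistedFwdDiff_one_iter (r : F[X]) (m : ℕ) :
    ((twistedFwdDiff 1)^[m] r).eval = Δ_[1] ^[m] r.eval := by
  induction m with
  | zero => rfl
  | succ m ih =>
    ext y
    rw [iterate_succ_apply', iterate_succ_apply', ← ih, eval_twistedFwdDiff, one_mul, fwdDiff]

section CharZero

variable [CharZero F]

theorem twistedFwdDiff_one_iter_eq_zero {r : F[X]} {m : ℕ} (hr : r.natDegree < m) :
    (twistedFwdDiff 1)^[m] r = 0 := by
  have h := eval_twistedFwdDiff_one_iter r m
  rw [fwdDiff_iter_eq_zero_of_degree_lt hr] at h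
  exact funext fun y ↦ by simpa using congrFun h y

theorem eq_zero_of_natDegree_lt_of_eval_natCast_eq_zero {r : F[X]} {m : ℕ}
    (hr : r.natDegree < m) (h : ∀ n < m, r.eval (n : F) = 0) : r = 0 :=
  eq_zero_of_natDegree_lt_card_of_eval_eq_zero r (f := fun i : Fin m ↦ (i : F))
    (Nat.cast_injective.comp Fin.val_injective) (fun i ↦ h i i.2) (by rwa [Fintype.card_fin])

theorem eq_zero_of_sum_pow_mul_eval_eq_zero {ι : Type*} {s : Finset ι} {u : ι → F}
    {r : ι → F[X]} {d : ι → ℕ} (hu : Set.InjOn u s) (hu0 : ∀ j ∈ s, u j ≠ 0)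
    (hr : ∀ j ∈ s, (r j).natDegree ≤ d j)
    (h : ∀ n < ∑ j ∈ s, (d j + 1), ∑ j ∈ s, u j ^ n * (r j).eval (n : F) = 0) :
    ∀ j ∈ s, r j = 0 := by
  classical
  induction s using Finset.induction_on generalizing u r with
  | empty => simp
  | insert j₀ s hj₀ ih =>
    simp only [mem_insert, forall_eq_or_imp] at hu0 hr ⊢
    rw [sum_insert hj₀] at h
    set m := d j₀ + 1
    set u' := fun j ↦ u j / u j₀
    set a := fun j (n : ℕ) ↦ u' j ^ n * (r j).eval (n : F)
    have hu' : ∀ j ∈ s, u' j ≠ 1 := fun j hj hj' ↦ hj₀ <|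
      hu (mem_insert_of_mem hj) (mem_insert_self _ _) ((div_eq_one_iff_eq hu0.1).mp hj') ▸ hj
    have hnorm : ∀ n < m + ∑ j ∈ s, (d j + 1), (∑ j ∈ insert j₀ s, a j) n = 0 := by
      intro n hn
      rw [Finset.sum_apply]
      simp only [a, u', div_pow, div_mul_eq_mul_div, ← sum_div, h n hn, zero_div]
    have hdiff : ∀ n < ∑ j ∈ s, (d j + 1),
        ∑ j ∈ s, u' j ^ n * ((twistedFwdDiff (u' j))^[m] (r j)).eval (n : F) = 0 := by
      intro n hn
      have := fwdDiff_iter_eq_zero_of_forall_lt hnorm hn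
      rw [fwdDiff_iter_finsetSum, Finset.sum_apply, sum_insert hj₀] at this
      simp only [a, fwdDiff_iter_pow_mul_eval] at this
      rwa [show u' j₀ = 1 from div_self hu0.1, twistedFwdDiff_one_iter_eq_zero
        (Nat.lt_succ_of_le hr.1), eval_zero, mul_zero, zero_add] at this
    have hs : ∀ j ∈ s, r j = 0 := by
      have := ih (u := u') (r := fun j ↦ (twistedFwdDiff (u' j))^[m] (r j))
        (fun i hi j hj hij ↦ hu (mem_insert_of_mem hi) (mem_insert_of_mem hj)
          (div_left_inj' hu0.1 |>.mp hij))
        (fun j hj ↦ div_ne_zero (hu0.2 j hj) hu0.1)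
        (fun j hj ↦ (natDegree_twistedFwdDiff_iter_le _ _ _).trans (hr.2 j hj)) hdiff
      refine fun j hj ↦ (twistedFwdDiff_injective (hu' j hj)).iterate m ?_
      rw [this j hj, iterate_fixed (map_zero _)]
    have heval : ∀ n < m, (r j₀).eval (n : F) = 0 := by
      intro n hn
      have := h n (by omega)
      rw [sum_insert hj₀, sum_eq_zero fun j hj ↦ by rw [hs j hj, eval_zero, mul_zero],
        add_zero] at this
      exact (mul_eq_zero.mp this).resolve_left (pow_ne_zero _ hu0.1)
    exact ⟨eq_zero_of_natDegree_lt_of_eval_natCast_eq_zero (Nat.lt_succ_of_le hr.1) heval, hs⟩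

theorem eq_zero_of_sum_pow_mul_eval_progression_eq_zero {ι : Type*} [Fintype ι] {u : ι → F}
    {r : ι → F[X]} {d : ι → ℕ} {t p : ℕ} (hp : p ≠ 0) (hu : Injective fun j ↦ u j ^ p)
    (hu0 : ∀ j, u j ≠ 0) (hr : ∀ j, (r j).natDegree ≤ d j)
    (h : ∀ n < ∑ j, (d j + 1), ∑ j, u j ^ (t + n * p) * (r j).eval ((t + n * p : ℕ) : F) = 0)
    (j : ι) : r j = 0 := by
  set q : F[X] := C (p : F) * X + C (t : F)
  have hq : q.natDegree = 1 := natDegree_linear (Nat.cast_ne_zero.mpr hp)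
  have hcomp := eq_zero_of_sum_pow_mul_eval_eq_zero (s := univ) (u := fun j ↦ u j ^ p)
    (r := fun j ↦ C (u j ^ t) * (r j).comp q) (d := d) hu.injOn
    (fun j _ ↦ pow_ne_zero _ (hu0 j))
    (fun j _ ↦ (natDegree_C_mul_le _ _).trans (by rw [natDegree_comp, hq, mul_one]; exact hr j))
    (fun n hn ↦ by
      rw [← h n hn]
      refine sum_congr rfl fun j _ ↦ ?_
      simp only [q, eval_mul, eval_C, eval_comp, eval_add, eval_X, Nat.cast_add, Nat.cast_mul,
        pow_add, ← pow_mul, mul_comm p n, show (p * n + t : F) = t + n * p by ring]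
      ring) j (mem_univ j)
  rw [mul_eq_zero, C_eq_zero, comp_eq_zero_iff] at hcomp
  rcases hcomp with hcomp | hcomp | ⟨-, hconst⟩
  · exact absurd hcomp (pow_ne_zero _ (hu0 j))
  · exact hcomp
  · simpa [hq] using congrArg natDegree hconst

end CharZero

end Polynomial

namespace Prony

variable {𝕜 : Type*} [RCLike 𝕜] {K : ℕ} {L : Fin K → ℕ}

abbrev Params (𝕜 : Type*) (L : Fin K → ℕ) := ((j : Fin K) → Fin (L j) → 𝕜) × (Fin K → 𝕜)

noncomputable def moment (x : Params 𝕜 L) (s : ℕ) : 𝕜 :=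
  ∑ j, x.2 j ^ s * (ofFn (L j) (x.1 j)).eval (s : 𝕜)

noncomputable def tangentPoly (x v : Params 𝕜 L) (j : Fin K) : 𝕜[X] :=
  ofFn (L j) (v.1 j) + C (v.2 j / x.2 j) * (X * ofFn (L j) (x.1 j))

theorem differentiable_moment (s : ℕ) : Differentiable 𝕜 fun x : Params 𝕜 L ↦ moment x s := by
  simp only [moment, eval_ofFn]
  fun_prop

theorem fderiv_moment_apply {x : Params 𝕜 L} (hx : ∀ j, x.2 j ≠ 0) (s : ℕ) (v : Params 𝕜 L) :
    fderiv 𝕜 (fun y ↦ moment y s) x v = ∑ j, x.2 j ^ s * (tangentPoly x v j).eval (s : 𝕜) := by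
  have hnode (j : Fin K) : HasFDerivAt (fun y : Params 𝕜 L ↦ y.2 j)
      ((ContinuousLinearMap.proj j).comp (ContinuousLinearMap.snd 𝕜 _ _)) x := by
    fun_prop
  let coeffEval (j : Fin K) : Params 𝕜 L →ₗ[𝕜] 𝕜 :=
    leval (s : 𝕜) ∘ₗ ofFn (L j) ∘ₗ LinearMap.proj j ∘ₗ LinearMap.fst 𝕜 _ _
  have hcoeff (j : Fin K) : HasFDerivAt (fun y : Params 𝕜 L ↦ (ofFn (L j) (y.1 j)).eval (s : 𝕜))
      (coeffEval j).toContinuousLinearMap x :=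
    (coeffEval j).toContinuousLinearMap.hasFDerivAt
  have hmoment : HasFDerivAt (fun y ↦ moment y s) _ x :=
    HasFDerivAt.fun_sum fun j _ ↦ ((hnode j).pow s).fun_mul (hcoeff j)
  rw [hmoment.fderiv]
  simp only [_root_.sum_apply, add_apply, smul_apply, LinearMap.coe_toContinuousLinearMap',
    coeffEval, LinearMap.coe_comp, comp_apply, ContinuousLinearMap.coe_comp, smul_eq_mul,
    nsmul_eq_mul, LinearMap.fst_apply, LinearMap.proj_apply, leval_apply,
    ContinuousLinearMap.proj_apply, ContinuousLinearMap.coe_snd', tangentPoly, eval_add, eval_mul,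
    eval_C, eval_X]
  refine sum_congr rfl fun j _ ↦ ?_
  cases s with
  | zero => simp
  | succ s =>
    field_simp [hx j]
    rw [Nat.add_sub_cancel, pow_succ]
    ring

theorem fderiv_moments_apply {ι : Type*} [Fintype ι] {x : Params 𝕜 L} (hx : ∀ j, x.2 j ≠ 0)
    (σ : ι → ℕ) (v : Params 𝕜 L) (n : ι) :
    fderiv 𝕜 (fun y n ↦ moment y (σ n)) x v n =
      ∑ j, x.2 j ^ σ n * (tangentPoly x v j).eval (σ n : 𝕜) := by
  rw [fderiv_pi fun n ↦ (differentiable_moment (σ n) x), ContinuousLinearMap.pi_apply,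
    fderiv_moment_apply hx]

theorem natDegree_tangentPoly_le (x v : Params 𝕜 L) (j : Fin K) :
    (tangentPoly x v j).natDegree ≤ L j := by
  refine natDegree_le_iff_coeff_eq_zero.mpr fun N hN ↦ ?_
  obtain ⟨M, rfl⟩ : ∃ M, N = M + 1 := Nat.exists_eq_succ_of_ne_zero (by omega)
  rw [tangentPoly, coeff_add, coeff_C_mul, coeff_X_mul, ofFn_coeff_eq_zero_of_ge _ hN.le,
    ofFn_coeff_eq_zero_of_ge _ (by omega), mul_zero, add_zero]

theorem coeff_tangentPoly_top {x v : Params 𝕜 L} {j : Fin K} (hj : 0 < L j) :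
    (tangentPoly x v j).coeff (L j) = v.2 j / x.2 j * x.1 j ⟨L j - 1, Nat.sub_lt hj one_pos⟩ := by
  have hX := coeff_X_mul (ofFn (L j) (x.1 j)) (L j - 1)
  rw [Nat.sub_add_cancel hj, ofFn_coeff_eq_val_of_lt _ (Nat.sub_lt hj one_pos)] at hX
  rw [tangentPoly, coeff_add, coeff_C_mul, hX, ofFn_coeff_eq_zero_of_ge _ le_rfl, zero_add]

theorem tangentPoly_zero (x : Params 𝕜 L) (j : Fin K) : tangentPoly x 0 j = 0 := by
  simp [tangentPoly]

theorem tangentPoly_toFn (x : Params 𝕜 L) {q : Fin K → 𝕜[X]} (hq : ∀ j, (q j).natDegree < L j)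
    (w : Fin K → 𝕜) (j : Fin K) :
    tangentPoly x (fun j ↦ toFn (L j) (q j), w) j =
      q j + C (w j / x.2 j) * (X * ofFn (L j) (x.1 j)) := by
  rw [tangentPoly, ofFn_comp_toFn_eq_id_of_natDegree_lt (hq j)]

theorem eq_zero_of_tangentPoly_eq_zero {x v : Params 𝕜 L} (hL : ∀ j, 0 < L j)
    (hx : ∀ j, x.2 j ≠ 0) (hlead : ∀ j, x.1 j ⟨L j - 1, Nat.sub_lt (hL j) one_pos⟩ ≠ 0)
    (h : ∀ j, tangentPoly x v j = 0) : v = 0 := by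
  have hw (j : Fin K) : v.2 j = 0 := by
    have := coeff_tangentPoly_top (x := x) (v := v) (hL j)
    rw [h j, coeff_zero, eq_comm, mul_eq_zero, div_eq_zero_iff] at this
    exact (this.resolve_right (hlead j)).resolve_right (hx j)
  have hc (j : Fin K) : v.1 j = 0 := by
    have := h j
    rw [tangentPoly, hw j, zero_div, C_0, zero_mul, add_zero] at this
    exact injective_ofFn (L j) (this.trans (map_zero _).symm)
  exact Prod.ext (funext hc) (funext hw)

theorem exists_ne_zero_tangentPoly_eq_zero {x : Params 𝕜 L} (hL : ∀ j, 0 < L j) (j₀ : Fin K)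
    (hc : x.1 j₀ ⟨L j₀ - 1, Nat.sub_lt (hL j₀) one_pos⟩ = 0) :
    ∃ v ≠ 0, ∀ j, tangentPoly x v j = 0 := by
  classical
  set w : Fin K → 𝕜 := Pi.single j₀ 1
  set q : Fin K → 𝕜[X] := fun j ↦ -(C (w j / x.2 j) * (X * ofFn (L j) (x.1 j)))
  have hq (j : Fin K) : (q j).natDegree < L j := by
    by_cases hj : j = j₀
    · subst hj
      rw [natDegree_neg]
      exact (natDegree_C_mul_le _ _).trans_lt (natDegree_X_mul_ofFn_lt (hL j) hc)
    · simpa [q, w, hj] using hL j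
  refine ⟨(fun j ↦ toFn (L j) (q j), w), fun hv ↦ ?_, fun j ↦ ?_⟩
  · simpa [w] using congrArg (fun v : Params 𝕜 L ↦ v.2 j₀) hv
  · rw [tangentPoly_toFn x hq, neg_add_cancel]

theorem exists_ne_zero_tangentPoly_eq_C {x : Params 𝕜 L} (hL : ∀ j, 0 < L j) {b : Fin K → 𝕜}
    (hb : b ≠ 0) : ∃ v ≠ 0, ∀ j, tangentPoly x v j = C (b j) := by
  have hv (j : Fin K) : tangentPoly x (fun j ↦ toFn (L j) (C (b j)), 0) j = C (b j) := by
    simp [tangentPoly_toFn x (fun j ↦ (natDegree_C (b j)).trans_lt (hL j))]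
  refine ⟨_, fun h0 ↦ hb (funext fun j ↦ ?_), hv⟩
  simpa [h0, tangentPoly_zero] using (hv j).symm

theorem finrank_params : Module.finrank 𝕜 (Params 𝕜 L) = ∑ j, (L j + 1) := by
  simp [Module.finrank_prod, Module.finrank_pi_fintype, sum_add_distrib]

theorem exists_ne_zero_fderiv_moments_eq_zero_of_leading_eq_zero {ι : Type*} [Fintype ι]
    {x : Params 𝕜 L} (hL : ∀ j, 0 < L j) (hx : ∀ j, x.2 j ≠ 0) (σ : ι → ℕ) (j₀ : Fin K)
    (hc : x.1 j₀ ⟨L j₀ - 1, Nat.sub_lt (hL j₀) one_pos⟩ = 0) :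
    ∃ v ≠ 0, fderiv 𝕜 (fun y n ↦ moment y (σ n)) x v = 0 :=
  let ⟨v, hv0, hv⟩ := exists_ne_zero_tangentPoly_eq_zero hL j₀ hc
  ⟨v, hv0, funext fun n ↦ by simp [fderiv_moments_apply hx, hv]⟩

theorem exists_ne_zero_fderiv_moments_eq_zero_of_pow_eq {x : Params 𝕜 L} (hL : ∀ j, 0 < L j)
    (hx : ∀ j, x.2 j ≠ 0) {R t p : ℕ} {i j : Fin K} (hij : i ≠ j) (h : x.2 i ^ p = x.2 j ^ p) :
    ∃ v ≠ 0, fderiv 𝕜 (fun y (n : Fin R) ↦ moment y (t + n * p)) x v = 0 := by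
  classical
  have hb : (Pi.single i (x.2 j ^ t) - Pi.single j (x.2 i ^ t) : Fin K → 𝕜) ≠ 0 := fun hb ↦
    pow_ne_zero t (hx j) (by simpa [hij] using congrFun hb i)
  obtain ⟨v, hv0, hv⟩ := exists_ne_zero_tangentPoly_eq_C (x := x) hL hb
  refine ⟨v, hv0, funext fun n ↦ ?_⟩
  simp only [fderiv_moments_apply hx, hv, eval_C, Pi.sub_apply, mul_sub, sum_sub_distrib,
    Pi.single_apply, mul_ite, mul_zero, sum_ite_eq', mem_univ, if_true, pow_add, pow_mul', h,
    Pi.zero_apply]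
  ring

theorem eq_zero_of_fderiv_moments_eq_zero {x : Params 𝕜 L} (hL : ∀ j, 0 < L j)
    (hx : ∀ j, x.2 j ≠ 0) (hlead : ∀ j, x.1 j ⟨L j - 1, Nat.sub_lt (hL j) one_pos⟩ ≠ 0)
    {R t p : ℕ} (hp : p ≠ 0) (hR : R = ∑ j, (L j + 1)) (hdist : Injective fun j ↦ x.2 j ^ p)
    {v : Params 𝕜 L} (hv : fderiv 𝕜 (fun y (n : Fin R) ↦ moment y (t + n * p)) x v = 0) :
    v = 0 := by
  refine eq_zero_of_tangentPoly_eq_zero hL hx hlead <|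
    eq_zero_of_sum_pow_mul_eval_progression_eq_zero (t := t) hp hdist hx
      (natDegree_tangentPoly_le x v) fun n hn ↦ ?_
  have := congrFun hv ⟨n, hR ▸ hn⟩
  rwa [fderiv_moments_apply hx] at this

end Prony

/-- Regular points of the decimated polynomial-Prony measurement map: the
Jacobian of the map sending the parameters `({c_{ℓ,j}}, {z_j})` to the
measurements `(m_t, m_{t+p}, …, m_{t+(R-1)p})` is invertible if and only if the
decimated nodes `z_j^p` are pairwise distinct and the leading coefficients
`c_{ℓ_j - 1, j}` are all nonzero. -/
theorem polynomial_prony_jacobian_regular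
    (K : ℕ) (L : Fin K → ℕ) (hL : ∀ j, 0 < L j)
    (t p : ℕ) (hp : 1 ≤ p) (R : ℕ) (hR : R = ∑ j, (L j + 1))
    (P : (((j : Fin K) → Fin (L j) → ℂ) × (Fin K → ℂ)) → (Fin R → ℂ))
    (hP : ∀ x n, P x n =
      ∑ j, x.2 j ^ (t + (n : ℕ) * p) *
        ∑ ℓ : Fin (L j), x.1 j ℓ * ((t + (n : ℕ) * p : ℕ) : ℂ) ^ (ℓ : ℕ))
    (x : ((j : Fin K) → Fin (L j) → ℂ) × (Fin K → ℂ))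
    (hz : ∀ j, ‖x.2 j‖ = 1) :
    Function.Bijective (fderiv ℂ P x) ↔
      ((∀ i j : Fin K, i ≠ j → x.2 i ^ p ≠ x.2 j ^ p) ∧
        ∀ j, x.1 j ⟨L j - 1, Nat.sub_lt (hL j) one_pos⟩ ≠ 0) := by
  have hx : ∀ j, x.2 j ≠ 0 := fun j h ↦ by simpa [h] using hz j
  obtain rfl : P = fun y (n : Fin R) ↦ Prony.moment y (t + n * p) := by
    ext y n
    simp [hP, Prony.moment, eval_ofFn]
  have hrank : Module.finrank ℂ (Prony.Params ℂ L) = Module.finrank ℂ (Fin R → ℂ) := by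
    rw [Prony.finrank_params, Module.finrank_fin_fun, hR]
  refine ⟨fun hbij ↦ ⟨fun i j hij hpow ↦ ?_, fun j hc ↦ ?_⟩, fun ⟨hdist, hlead⟩ ↦ ?_⟩
  · obtain ⟨v, hv0, hv⟩ := Prony.exists_ne_zero_fderiv_moments_eq_zero_of_pow_eq hL hx hij hpow
    exact hv0 (hbij.injective (hv.trans (map_zero _).symm))
  · obtain ⟨v, hv0, hv⟩ :=
      Prony.exists_ne_zero_fderiv_moments_eq_zero_of_leading_eq_zero hL hx
        (fun n : Fin R ↦ t + n * p) j hc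
    exact hv0 (hbij.injective (hv.trans (map_zero _).symm))
  · have hinj : Injective (fderiv ℂ (fun y (n : Fin R) ↦ Prony.moment y (t + n * p)) x) :=
      (injective_iff_map_eq_zero _).mpr fun v ↦ Prony.eq_zero_of_fderiv_moments_eq_zero hL hx
        hlead (by omega) hR fun i j hij ↦ not_imp_not.mp (hdist i j) hij
    exact ⟨hinj, (LinearMap.injective_iff_surjective_of_finrank_eq_finrank hrank).mp hinj⟩
end

section
/- Let f be a piecewise polynomial of degree d on [-π,π] with a single jump discontinuity at x_1 and jump magnitudes a_{ℓ,1}, 0 ≤ ℓ ≤ d, with a_{0,1} ≠ 0. Then the rescaled Fourier coefficients m_k = 2π (ik)^{d+1} c_k(f) satisfy the polynomial Prony form m_k = z_1^k ∑_{ℓ=0}^{d} c_ℓ k^ℓ with z_1 = e^{-i x_1} and c_ℓ = i^ℓ a_{d-ℓ,1}, and in particular the leading coefficient c_d = i^d a_{0,1} is nonzero. -/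
open Real

/-- A piecewise polynomial of degree `d` with a single jump at `x₁` and jump
magnitudes `a_ℓ` (with `a_0 ≠ 0`) has rescaled Fourier coefficients
`m_k = 2π (ik)^{d+1} c_k(f)` of polynomial Prony form
`m_k = z₁^k ∑_ℓ c_ℓ k^ℓ` with `z₁ = e^{-i x₁}`, `c_ℓ = i^ℓ a_{d-ℓ}` and
nonzero leading coefficient `c_d = i^d a_0`. -/
theorem single_jump_prony_form (d : ℕ) (x1 : ℝ) (a : ℕ → ℝ) (ha0 : a 0 ≠ 0)
    (c : ℕ → ℂ)
    (hc : ∀ k : ℕ, 1 ≤ k → c k = (1 / (2 * π)) * Complex.exp (-Complex.I * k * x1) *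
      ∑ ℓ ∈ Finset.range (d + 1), (Complex.I * k) ^ (-(ℓ : ℤ) - 1) * a ℓ)
    (m : ℕ → ℂ) (hm : ∀ k : ℕ, m k = 2 * π * (Complex.I * k) ^ (d + 1) * c k) :
    (∀ k : ℕ, 1 ≤ k → m k = Complex.exp (-Complex.I * x1) ^ k *
        ∑ ℓ ∈ Finset.range (d + 1), Complex.I ^ ℓ * a (d - ℓ) * (k : ℂ) ^ ℓ)
      ∧ Complex.I ^ d * (a 0 : ℂ) ≠ 0 := by
  have hπ : (π : ℂ) ≠ 0 := by exact_mod_cast Real.pi_ne_zero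
  constructor
  · intro k hk
    have hk0 : (k : ℂ) ≠ 0 := Nat.cast_ne_zero.2 (by omega)
    have hIk : Complex.I * (k : ℂ) ≠ 0 := mul_ne_zero Complex.I_ne_zero hk0
    have hexp : Complex.exp (-Complex.I * (k : ℂ) * (x1 : ℂ)) =
        Complex.exp (-Complex.I * (x1 : ℂ)) ^ k := by
      rw [← Complex.exp_nat_mul]; ring_nf
    rw [hm, hc k hk, hexp,
      ← Finset.sum_range_reflect (fun ℓ => Complex.I ^ ℓ * (a (d - ℓ) : ℂ) * (k : ℂ) ^ ℓ)]
    have hsum : ∀ ℓ ∈ Finset.range (d + 1),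
        (Complex.I * (k : ℂ)) ^ (d + 1) * ((Complex.I * (k : ℂ)) ^ (-(ℓ : ℤ) - 1) * (a ℓ : ℂ))
        = Complex.I ^ (d + 1 - 1 - ℓ) * (a (d - (d + 1 - 1 - ℓ)) : ℂ) * (k : ℂ) ^ (d + 1 - 1 - ℓ) := by
      intro ℓ hℓ
      have hℓd : ℓ ≤ d := by simpa [Nat.lt_succ_iff] using Finset.mem_range.mp hℓ
      have h1 : (Complex.I * (k : ℂ)) ^ (d + 1) * (Complex.I * (k : ℂ)) ^ (-(ℓ : ℤ) - 1)
          = (Complex.I * (k : ℂ)) ^ (d - ℓ) := by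
        rw [← zpow_natCast (Complex.I * (k : ℂ)) (d + 1), ← zpow_add₀ hIk,
          ← zpow_natCast (Complex.I * (k : ℂ)) (d - ℓ)]
        congr 1
        omega
      have h2 : d + 1 - 1 - ℓ = d - ℓ := by omega
      have h3 : d - (d - ℓ) = ℓ := by omega
      rw [h2, h3, ← mul_assoc, h1, mul_pow]
      ring
    have hS : (Complex.I * (k : ℂ)) ^ (d + 1) *
        ∑ ℓ ∈ Finset.range (d + 1), (Complex.I * (k : ℂ)) ^ (-(ℓ : ℤ) - 1) * (a ℓ : ℂ)
        = ∑ j ∈ Finset.range (d + 1),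
          Complex.I ^ (d + 1 - 1 - j) * (a (d - (d + 1 - 1 - j)) : ℂ) * (k : ℂ) ^ (d + 1 - 1 - j) := by
      rw [Finset.mul_sum]; exact Finset.sum_congr rfl hsum
    rw [← hS]
    field_simp
  · exact mul_ne_zero (pow_ne_zero _ Complex.I_ne_zero)
      (by exact_mod_cast ha0)
end

section
/- Let P(k) = ∑_{ℓ=0}^{d} c_ℓ k^ℓ and P̃(k) = ∑_{ℓ=0}^{d} c̃_ℓ k^ℓ be polynomials such that |P(t+np) - P̃(t+np)| ≤ ε for n = 0, 1, ..., d, where t ≥ p ≥ 1. Then the coefficients satisfy |c_ℓ - c̃_ℓ| ≤ C(d) · t^{d-ℓ} p^{-d} ε for ℓ = 0, 1, ..., d, where C(d) depends only on d. -/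
open Polynomial Finset

/-- Interpolation at the fixed nodes `0, 1, …, d` has bounded inverse: the
coefficients of a polynomial of degree `≤ d` are controlled by its values there. -/
lemma coeff_bound_of_eval_bound (d : ℕ) :
    ∃ C0 > 0, ∀ (R : ℂ[X]) (ε : ℝ), R.natDegree ≤ d →
      (∀ n : ℕ, n ≤ d → ‖R.eval (n : ℂ)‖ ≤ ε) →
      ∀ j, ‖R.coeff j‖ ≤ C0 * ε := by
  set V : Matrix (Fin (d + 1)) (Fin (d + 1)) ℂ :=
    Matrix.vandermonde (fun i : Fin (d + 1) => ((i : ℕ) : ℂ)) with hV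
  have hdet : V.det ≠ 0 := by
    rw [hV, Matrix.det_vandermonde_ne_zero_iff]
    intro i j hij
    exact Fin.ext (Nat.cast_injective hij)
  set W := V⁻¹ with hW
  refine ⟨(∑ j, ∑ n, ‖W j n‖) + 1, by positivity, ?_⟩
  intro R ε hdeg hval j
  have hε : 0 ≤ ε := le_trans (norm_nonneg _) (hval 0 (Nat.zero_le d))
  by_cases hj : j ≤ d
  · set b : Fin (d + 1) → ℂ := fun i => R.coeff i with hb
    have hmul : V.mulVec b = fun n : Fin (d + 1) => R.eval ((n : ℕ) : ℂ) := by
      funext n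
      rw [Polynomial.eval_eq_sum_range' (Nat.lt_succ_of_le hdeg)]
      rw [← Fin.sum_univ_eq_sum_range (fun i => R.coeff i * ((n : ℕ) : ℂ) ^ i)]
      simp [Matrix.mulVec, dotProduct, hV, Matrix.vandermonde, hb, mul_comm]
    have hbW : b = W.mulVec (V.mulVec b) := by
      rw [Matrix.mulVec_mulVec, hW, Matrix.nonsing_inv_mul V (isUnit_iff_ne_zero.mpr hdet),
        Matrix.one_mulVec]
    have hjb : R.coeff j = b ⟨j, Nat.lt_succ_of_le hj⟩ := rfl
    rw [hjb, hbW, hmul]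
    set j' : Fin (d + 1) := ⟨j, Nat.lt_succ_of_le hj⟩
    calc ‖W.mulVec (fun n : Fin (d+1) => R.eval ((n : ℕ) : ℂ)) j'‖
        ≤ ∑ n, ‖W j' n * R.eval ((n : ℕ) : ℂ)‖ := by
          simp only [Matrix.mulVec, dotProduct]
          exact norm_sum_le _ _
      _ ≤ ∑ n : Fin (d + 1), ‖W j' n‖ * ε := by
          refine Finset.sum_le_sum fun n _ => ?_
          rw [norm_mul]
          exact mul_le_mul_of_nonneg_left (hval n (Nat.lt_succ_iff.mp n.2))
            (norm_nonneg _)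
      _ = (∑ n, ‖W j' n‖) * ε := by rw [Finset.sum_mul]
      _ ≤ ((∑ j, ∑ n, ‖W j n‖) + 1) * ε := by
          refine mul_le_mul_of_nonneg_right ?_ hε
          refine le_trans (Finset.single_le_sum (f := fun j => ∑ n, ‖W j n‖)
            (fun i _ => Finset.sum_nonneg fun n _ => norm_nonneg _)
            (Finset.mem_univ j')) (by linarith)
  · rw [Polynomial.coeff_eq_zero_of_natDegree_lt (lt_of_le_of_lt hdeg (Nat.lt_of_not_le hj))]
    simpa using by positivity

/-- Conditioning of polynomial interpolation on the arithmetic progression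
`t, t+p, …, t+dp`: if two degree-`d` polynomials differ by at most `ε` at these
`d+1` points, then their coefficients differ by at most
`C(d) t^{d-ℓ} p^{-d} ε` (for `t ≥ p ≥ 1`). -/
theorem poly_interpolation_conditioning (d : ℕ) :
    ∃ C > 0, ∀ t p : ℕ, 1 ≤ p → p ≤ t →
      ∀ (c c' : ℕ → ℂ) (ε : ℝ),
        (∀ n ≤ d, ‖
            ((∑ ℓ ∈ Finset.range (d + 1), c ℓ * ((t + n * p : ℕ) : ℂ) ^ ℓ)
              - ∑ ℓ ∈ Finset.range (d + 1), c' ℓ * ((t + n * p : ℕ) : ℂ) ^ ℓ)‖ ≤ ε) →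
        ∀ ℓ ≤ d, ‖c ℓ - c' ℓ‖
          ≤ C * (t : ℝ) ^ (d - ℓ) * (p : ℝ) ^ (-(d : ℤ)) * ε := by
  obtain ⟨C0, hC0, hkey⟩ := coeff_bound_of_eval_bound d
  refine ⟨C0 * (d + 1) * 2 ^ d, by positivity, ?_⟩
  intro t p hp hpt c c' ε hval ℓ hℓ
  have hp0 : (0 : ℝ) < p := by exact_mod_cast hp
  have ht0 : (0 : ℝ) < t := lt_of_lt_of_le hp0 (by exact_mod_cast hpt)
  have hpC : ((p : ℂ)) ≠ 0 := Nat.cast_ne_zero.mpr (by omega)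
  have hε : 0 ≤ ε :=
    le_trans (norm_nonneg _) (hval 0 (Nat.zero_le d))
  -- difference polynomial
  obtain ⟨Q, hQ⟩ : ∃ Q : ℂ[X], Q = ∑ i ∈ range (d + 1), C (c i - c' i) * X ^ i := ⟨_, rfl⟩
  have hQdeg : Q.natDegree ≤ d := by
    rw [hQ]
    refine Polynomial.natDegree_sum_le_of_forall_le _ _ fun i hi => ?_
    refine le_trans (Polynomial.natDegree_C_mul_le _ _) ?_
    simpa using Nat.lt_succ_iff.mp (Finset.mem_range.mp hi)
  have hQcoeff : ∀ i ≤ d, Q.coeff i = c i - c' i := by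
    intro i hi
    rw [hQ, Polynomial.finset_sum_coeff]
    rw [Finset.sum_eq_single i (fun b _ hb => by
      simp [sub_mul, Polynomial.coeff_sub, Polynomial.coeff_C_mul,
        Polynomial.coeff_X_pow, Ne.symm hb])
      (fun h => absurd (Finset.mem_range.mpr (Nat.lt_succ_of_le hi)) h)]
    simp [sub_mul, Polynomial.coeff_sub, Polynomial.coeff_C_mul, Polynomial.coeff_X_pow]
  have hQeval : ∀ x : ℂ, Q.eval x =
      (∑ i ∈ range (d + 1), c i * x ^ i) - ∑ i ∈ range (d + 1), c' i * x ^ i := by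
    intro x
    rw [hQ, Polynomial.eval_finset_sum, ← Finset.sum_sub_distrib]
    simp [sub_mul]
  -- rescaled polynomial
  obtain ⟨g, hg⟩ : ∃ g : ℂ[X], g = C (t : ℂ) + C (p : ℂ) * X := ⟨_, rfl⟩
  obtain ⟨R, hR⟩ : ∃ R : ℂ[X], R = Q.comp g := ⟨_, rfl⟩
  have hRdeg : R.natDegree ≤ d := by
    rw [hR]
    refine le_trans Polynomial.natDegree_comp_le ?_
    have : g.natDegree ≤ 1 := by
      rw [hg]
      refine le_trans (Polynomial.natDegree_add_le _ _) ?_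
      simp only [Polynomial.natDegree_C, max_le_iff]
      exact ⟨Nat.zero_le 1, le_trans (Polynomial.natDegree_mul_le)
        (by simp [Polynomial.natDegree_X_le])⟩
    calc Q.natDegree * g.natDegree ≤ d * 1 := Nat.mul_le_mul hQdeg this
      _ = d := Nat.mul_one d
  have hReval : ∀ n : ℕ, n ≤ d → ‖R.eval (n : ℂ)‖ ≤ ε := by
    intro n hn
    have : R.eval (n : ℂ) = Q.eval (((t + n * p : ℕ) : ℂ)) := by
      rw [hR, Polynomial.eval_comp, hg]
      simp only [Polynomial.eval_add, Polynomial.eval_mul, Polynomial.eval_C,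
        Polynomial.eval_X]
      congr 1
      push_cast
      ring
    rw [this, hQeval]
    exact hval n hn
  have hRb := fun j => hkey R ε hRdeg hReval j
  -- recover Q from R
  obtain ⟨s, hs⟩ : ∃ s : ℂ[X], s = C ((p : ℂ)⁻¹) * (X - C (t : ℂ)) := ⟨_, rfl⟩
  have hgs : g.comp s = X := by
    rw [hg, hs]
    simp only [Polynomial.add_comp, Polynomial.C_comp, Polynomial.mul_comp,
      Polynomial.X_comp]
    rw [← mul_assoc, ← Polynomial.C_mul, mul_inv_cancel₀ hpC, Polynomial.C_1, one_mul]
    ring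
  have hQs : R.comp s = Q := by
    rw [hR, Polynomial.comp_assoc, hgs, Polynomial.comp_X]
  have hcoeff : Q.coeff ℓ = ∑ j ∈ range (d + 1),
      R.coeff j * (((p : ℂ)⁻¹) ^ j * ((X - C (t : ℂ)) ^ j).coeff ℓ) := by
    conv_lhs => rw [← hQs, R.as_sum_range' (d + 1) (Nat.lt_succ_of_le hRdeg)]
    rw [Polynomial.sum_comp, Polynomial.finset_sum_coeff]
    refine Finset.sum_congr rfl fun j _ => ?_
    rw [Polynomial.monomial_comp, hs, mul_pow, ← Polynomial.C_pow,
      Polynomial.coeff_C_mul, Polynomial.coeff_C_mul]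
    try ring
  -- final estimate
  have hPT : (p : ℝ) ≤ (t : ℝ) := by exact_mod_cast hpt
  have habs : ∀ j, ‖R.coeff j * (((p : ℂ)⁻¹) ^ j * ((X - C (t : ℂ)) ^ j).coeff ℓ)‖
      = ‖R.coeff j‖ *
        ((t : ℝ) ^ (j - ℓ) * (j.choose ℓ : ℝ) / (p : ℝ) ^ j) := by
    intro j
    rw [norm_mul, norm_mul, norm_pow, norm_inv, Complex.norm_natCast]
    have : ((X - C (t : ℂ)) ^ j).coeff ℓ = (-(t : ℂ)) ^ (j - ℓ) * (j.choose ℓ : ℂ) := by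
      rw [sub_eq_add_neg, ← Polynomial.C_neg, Polynomial.coeff_X_add_C_pow]
    rw [this, norm_mul, norm_pow, norm_neg, Complex.norm_natCast, Complex.norm_natCast]
    ring
  have hterm : ∀ j ∈ range (d + 1),
      ‖R.coeff j * (((p : ℂ)⁻¹) ^ j * ((X - C (t : ℂ)) ^ j).coeff ℓ)‖
      ≤ C0 * ε * (2 ^ d * (t : ℝ) ^ (d - ℓ) / (p : ℝ) ^ d) := by
    intro j hj
    have hjd : j ≤ d := Nat.lt_succ_iff.mp (Finset.mem_range.mp hj)
    rw [habs j]
    rcases lt_or_ge j ℓ with hcase | hcase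
    · rw [Nat.choose_eq_zero_of_lt hcase]
      have h0 : (0:ℝ) ≤ C0 * ε := mul_nonneg hC0.le hε
      simp only [Nat.cast_zero, mul_zero, zero_div, mul_zero]
      positivity
    · refine mul_le_mul (hRb j) ?_ (by positivity) (mul_nonneg hC0.le hε)
      rw [div_le_div_iff₀ (by positivity) (by positivity)]
      have hch : (j.choose ℓ : ℝ) ≤ 2 ^ d := by
        have h1 : j.choose ℓ ≤ 2 ^ d := by
          calc j.choose ℓ ≤ ∑ k ∈ Finset.range (j + 1), j.choose k :=
                Finset.single_le_sum (fun k _ => Nat.zero_le _)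
                  (Finset.mem_range.mpr (Nat.lt_succ_of_le hcase))
            _ = 2 ^ j := Nat.sum_range_choose j
            _ ≤ 2 ^ d := Nat.pow_le_pow_right (by norm_num) hjd
        exact_mod_cast h1
      have h1 : (j.choose ℓ : ℝ) * (p : ℝ) ^ (d - j) ≤ 2 ^ d * (t : ℝ) ^ (d - j) :=
        mul_le_mul hch (pow_le_pow_left₀ hp0.le hPT _) (by positivity) (by positivity)
      have hPd : (p : ℝ) ^ d = (p : ℝ) ^ j * (p : ℝ) ^ (d - j) := by
        rw [← pow_add]; congr 1; omega
      have hTd : (t : ℝ) ^ (d - ℓ) = (t : ℝ) ^ (j - ℓ) * (t : ℝ) ^ (d - j) := by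
        rw [← pow_add]; congr 1; omega
      rw [hPd, hTd]
      have h2 := mul_le_mul_of_nonneg_left h1
        (show (0:ℝ) ≤ (t : ℝ) ^ (j - ℓ) * (p : ℝ) ^ j by positivity)
      calc (t:ℝ) ^ (j - ℓ) * (j.choose ℓ : ℝ) * ((p:ℝ) ^ j * (p:ℝ) ^ (d - j))
          = (t:ℝ) ^ (j - ℓ) * (p:ℝ) ^ j * ((j.choose ℓ : ℝ) * (p:ℝ) ^ (d - j)) := by ring
        _ ≤ (t:ℝ) ^ (j - ℓ) * (p:ℝ) ^ j * (2 ^ d * (t:ℝ) ^ (d - j)) := h2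
        _ = 2 ^ d * ((t:ℝ) ^ (j - ℓ) * (t:ℝ) ^ (d - j)) * (p:ℝ) ^ j := by ring
  have hsum : ‖c ℓ - c' ℓ‖
      ≤ (d + 1) * (C0 * ε * (2 ^ d * (t : ℝ) ^ (d - ℓ) / (p : ℝ) ^ d)) := by
    rw [← hQcoeff ℓ hℓ, hcoeff]
    refine le_trans (norm_sum_le _ _) (le_trans (Finset.sum_le_sum hterm) (le_of_eq ?_))
    rw [Finset.sum_const, Finset.card_range, nsmul_eq_mul]
    push_cast; ring
  refine le_trans hsum (le_of_eq ?_)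
  rw [zpow_neg, zpow_natCast]
  field_simp
end
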